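/- arXiv:1801.03919 — 7 statements merged into one kernel-verified Lean document; each statement's English description precedes it below -/
import Mathlib

section
/- Let dA, dB ≥ 1 and let ψ : Fin dA × Fin dB → ℂ be a unit vector (∑_{(i,j)} |ψ(i,j)|² = 1). Then the following are equivalent: (1) there exist a permutation π of Fin dA × Fin dB, phases φ : Fin dA × Fin dB → ℝ, and vectors a : Fin dA → ℂ, b : Fin dB → ℂ such that exp(i·φ(i,j))·ψ(π(i,j)) = a(i)·b(j) for all (i,j) (i.e., some incoherent unitary maps ψ to a product vector); (2) there exists a permutation π of Fin dA × Fin dB such that the real matrix M with M(i,j) = |ψ(π(i,j))| has rank 1. -/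
/-!
Phases change no modulus and can rotate every coefficient onto the nonnegative reals, so
`ψ ∘ π` is carried to a product vector by phases exactly when its matrix of moduli is an
outer product `c i * d j`. A nonzero matrix is an outer product iff it has rank one, and
normalisation rules out `ψ = 0`.
-/

namespace Matrix

variable {m n K : Type*} [Fintype m] [Fintype n] [Field K]

theorem rank_eq_zero_iff {A : Matrix m n K} : A.rank = 0 ↔ A = 0 := by
  rw [rank_eq_finrank_span_cols, Submodule.finrank_eq_zero, Submodule.span_eq_bot]
  simp only [Set.mem_range, forall_exists_index, forall_apply_eq_imp_iff]
  constructor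
  · exact fun h => ext fun i j => by simpa using congrFun (h j) i
  · rintro rfl j
    rfl

theorem exists_eq_vecMulVec_of_rank_eq_one {A : Matrix m n K} (h : A.rank = 1) :
    ∃ (u : m → K) (v : n → K), A = vecMulVec u v := by
  rw [rank_eq_finrank_span_cols] at h
  obtain ⟨u, -, hu⟩ := finrank_eq_one_iff'.mp h
  choose v hv using fun j => hu ⟨Aᵀ j, Submodule.subset_span ⟨j, rfl⟩⟩
  refine ⟨u, v, ext fun i j => ?_⟩
  simpa [vecMulVec_apply, mul_comm] using (congrFun (congrArg Subtype.val (hv j)) i).symm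

theorem rank_eq_one_iff_exists_eq_vecMulVec {A : Matrix m n K} (hA : A ≠ 0) :
    A.rank = 1 ↔ ∃ (u : m → K) (v : n → K), A = vecMulVec u v := by
  refine ⟨exists_eq_vecMulVec_of_rank_eq_one, ?_⟩
  rintro ⟨u, v, rfl⟩
  have hle := rank_vecMulVec_le u v
  have hne : (vecMulVec u v).rank ≠ 0 := mt rank_eq_zero_iff.mp hA
  omega

end Matrix

theorem Complex.exp_neg_arg_mul_I_mul_self (z : ℂ) :
    Complex.exp (-(z.arg : ℂ) * Complex.I) * z = ‖z‖ := by
  nth_rewrite 2 [← Complex.norm_mul_exp_arg_mul_I z]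
  rw [mul_left_comm, ← Complex.exp_add, neg_mul, neg_add_cancel, Complex.exp_zero, mul_one]

theorem exists_phases_mul_eq_product_iff_rank_norm_eq_one {m n : Type*} [Fintype m] [Fintype n]
    {f : m × n → ℂ} (hf : f ≠ 0) :
    (∃ (φ : m × n → ℝ) (a : m → ℂ) (b : n → ℂ),
        ∀ p, Complex.exp ((φ p : ℂ) * Complex.I) * f p = a p.1 * b p.2) ↔
      (Matrix.of fun i j => ‖f (i, j)‖).rank = 1 := by
  have hA : (Matrix.of fun i j => ‖f (i, j)‖) ≠ 0 := by
    refine fun h => hf (funext fun p => ?_)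
    simpa using congrFun₂ h p.1 p.2
  rw [Matrix.rank_eq_one_iff_exists_eq_vecMulVec hA]
  constructor
  · rintro ⟨φ, a, b, hab⟩
    refine ⟨fun i => ‖a i‖, fun j => ‖b j‖, Matrix.ext fun i j => ?_⟩
    rw [Matrix.of_apply, Matrix.vecMulVec_apply, ← norm_mul, ← hab (i, j), norm_mul,
      Complex.norm_exp_ofReal_mul_I, one_mul]
  · rintro ⟨c, d, hcd⟩
    refine ⟨fun p => -(f p).arg, fun i => c i, fun j => d j, fun p => ?_⟩
    have := congrFun₂ hcd p.1 p.2
    rw [Matrix.of_apply, Matrix.vecMulVec_apply] at this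
    push_cast
    rw [Complex.exp_neg_arg_mul_I_mul_self, this, Complex.ofReal_mul]

theorem incoherent_unitary_to_product_iff_exists_perm_rank_one_general
    {dA dB : ℕ}
    (ψ : Fin dA × Fin dB → ℂ)
    (hψ : ∑ p : Fin dA × Fin dB, ‖ψ p‖ ^ 2 = 1) :
    (∃ (π : Equiv.Perm (Fin dA × Fin dB)) (φ : Fin dA × Fin dB → ℝ)
        (a : Fin dA → ℂ) (b : Fin dB → ℂ),
        ∀ p : Fin dA × Fin dB,
          Complex.exp ((φ p : ℂ) * Complex.I) * ψ (π p) = a p.1 * b p.2) ↔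
      (∃ π : Equiv.Perm (Fin dA × Fin dB),
        (Matrix.of fun i j => ‖ψ (π (i, j))‖).rank = 1) := by
  have hψ0 : ψ ≠ 0 := by
    rintro rfl
    simp at hψ
  refine exists_congr fun π => exists_phases_mul_eq_product_iff_rank_norm_eq_one (f := ψ ∘ π) ?_
  exact fun h => hψ0 (funext fun p => by simpa using congrFun h (π.symm p))

/-- For a bipartite pure state `ψ` on `Fin dA × Fin dB`, the existence
of an incoherent unitary (permutation `π` of the joint incoherent basis, together with
phases `φ`) mapping `ψ` to a product vector `(i,j) ↦ a i * b j` is equivalent to the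
existence of a permutation `π` such that the matrix of moduli `(i,j) ↦ |ψ (π (i,j))|`
has rank one. -/
theorem incoherent_unitary_to_product_iff_exists_perm_rank_one
    {dA dB : ℕ} (hdA : 1 ≤ dA) (hdB : 1 ≤ dB)
    (ψ : Fin dA × Fin dB → ℂ)
    (hψ : ∑ p : Fin dA × Fin dB, ‖ψ p‖ ^ 2 = 1) :
    (∃ (π : Equiv.Perm (Fin dA × Fin dB)) (φ : Fin dA × Fin dB → ℝ)
        (a : Fin dA → ℂ) (b : Fin dB → ℂ),
        ∀ p : Fin dA × Fin dB,
          Complex.exp ((φ p : ℂ) * Complex.I) * ψ (π p) = a p.1 * b p.2) ↔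
      (∃ π : Equiv.Perm (Fin dA × Fin dB),
        (Matrix.of fun i j => ‖ψ (π (i, j))‖).rank = 1) :=
  incoherent_unitary_to_product_iff_exists_perm_rank_one_general ψ hψ
end

section
/- Let M : Matrix (Fin m) (Fin n) ℂ be a nonzero matrix. Then the ℓ²→ℓ² operator norm of M is at most the Frobenius norm of M (the square root of ∑_{i,j} |M i j|²), and equality holds if and only if M has rank 1. -/
/-!
The squared singular values of `M` are the eigenvalues `λⱼ ≥ 0` of `Mᴴ * M`. By the C⋆-identity
and the spectral theorem, `‖M‖² = ‖Mᴴ * M‖ = maxⱼ λⱼ`, while `∑ᵢⱼ |Mᵢⱼ|² = tr (Mᴴ * M) = ∑ⱼ λⱼ`,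
and `rank M = rank (Mᴴ * M)` is the number of nonzero `λⱼ`. The maximum of finitely many
nonnegative reals, not all zero, is at most their sum, with equality iff exactly one is nonzero.
-/

/-- The ℓ²→ℓ² operator norm of a complex matrix: the operator norm of the induced
continuous linear map between the corresponding Euclidean spaces (i.e. the largest
singular value). -/
noncomputable def l2OpNorm {m n : ℕ} (M : Matrix (Fin m) (Fin n) ℂ) : ℝ :=
  ‖LinearMap.toContinuousLinearMap (Matrix.toEuclideanLin M)‖

open Matrix
open scoped Matrix.Norms.L2Operator ComplexOrder

section

variable {ι : Type*} [Fintype ι] {f : ι → ℝ}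

theorem pi_norm_le_sum_of_nonneg (hf : 0 ≤ f) : ‖f‖ ≤ ∑ i, f i :=
  (pi_norm_le_iff_of_nonneg (Finset.sum_nonneg fun i _ => hf i)).2 fun i => by
    rw [Real.norm_of_nonneg (hf i)]
    exact Finset.single_le_sum (fun j _ => hf j) (Finset.mem_univ i)

theorem pi_norm_eq_sum_iff_card_ne_zero_eq_one (hf : 0 ≤ f) (hf0 : f ≠ 0) :
    ‖f‖ = ∑ i, f i ↔ Fintype.card {i // f i ≠ 0} = 1 := by
  constructor
  · intro h
    classical
    have : Nonempty ι := let ⟨i, _⟩ := Function.ne_iff.1 hf0; ⟨i⟩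
    obtain ⟨i₀, hi₀ : ‖f i₀‖ = ‖f‖⟩ := (IsGreatest.pi_norm f).1
    rw [Real.norm_of_nonneg (hf i₀)] at hi₀
    have hrest : ∑ j ∈ Finset.univ.erase i₀, f j = 0 := by
      linarith [Finset.add_sum_erase Finset.univ f (Finset.mem_univ i₀)]
    have hzero : ∀ j ≠ i₀, f j = 0 := fun j hj =>
      (Finset.sum_eq_zero_iff_of_nonneg fun k _ => hf k).1 hrest j
        (Finset.mem_erase.2 ⟨hj, Finset.mem_univ j⟩)
    have hi₀0 : f i₀ ≠ 0 := fun h0 => hf0 (funext fun j => by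
      by_cases hj : j = i₀ <;> simp [hj, h0, hzero])
    exact Fintype.card_eq_one_iff.2
      ⟨⟨i₀, hi₀0⟩, fun ⟨j, hj⟩ => Subtype.ext (not_not.1 fun h => hj (hzero j h))⟩
  · intro h
    obtain ⟨⟨i₁, _⟩, huniq⟩ := Fintype.card_eq_one_iff.1 h
    have hsum : ∑ i, f i = f i₁ := Fintype.sum_eq_single i₁ fun j hj =>
      not_not.1 fun h => hj (congrArg Subtype.val (huniq ⟨j, h⟩))
    refine le_antisymm (pi_norm_le_sum_of_nonneg hf) ?_
    rw [hsum, ← Real.norm_of_nonneg (hf i₁)]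
    exact norm_le_pi_norm f i₁

end

namespace Matrix

variable {𝕜 m n : Type*} [RCLike 𝕜] [Fintype m] [Fintype n]

theorem trace_conjTranspose_mul_self_eq_sum_norm_sq (A : Matrix m n 𝕜) :
    (Aᴴ * A).trace = ((∑ i, ∑ j, ‖A i j‖ ^ 2 : ℝ) : 𝕜) := by
  simp_rw [trace, diag_apply, mul_apply, conjTranspose_apply, RCLike.star_def, RCLike.conj_mul]
  push_cast
  exact Finset.sum_comm

theorem sum_eigenvalues_conjTranspose_mul_self [DecidableEq n] (A : Matrix m n 𝕜) :
    ∑ j, (isHermitian_conjTranspose_mul_self A).eigenvalues j = ∑ i, ∑ j, ‖A i j‖ ^ 2 := by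
  have := (isHermitian_conjTranspose_mul_self A).trace_eq_sum_eigenvalues
  rw [trace_conjTranspose_mul_self_eq_sum_norm_sq] at this
  exact_mod_cast this.symm

theorem IsHermitian.l2_opNorm_eq_norm_eigenvalues [DecidableEq n] {A : Matrix n n 𝕜}
    (hA : A.IsHermitian) : ‖A‖ = ‖hA.eigenvalues‖ := by
  conv_lhs => rw [hA.spectral_theorem]
  rw [Unitary.conjStarAlgAut_apply, ← Unitary.coe_star, CStarRing.norm_mul_coe_unitary,
    CStarRing.norm_coe_unitary_mul, l2_opNorm_diagonal]
  simp [Pi.norm_def]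

end Matrix

theorem l2OpNorm_eq_l2_opNorm {m n : ℕ} (M : Matrix (Fin m) (Fin n) ℂ) : l2OpNorm M = ‖M‖ := rfl

/-- For a nonzero complex matrix `M`, the ℓ²→ℓ² operator norm of `M` is
at most the Frobenius norm `√(∑ i j, ‖M i j‖²)`, with equality iff `M` has rank 1. -/
theorem l2OpNorm_le_frobenius_and_eq_iff_rank_one
    {m n : ℕ} (M : Matrix (Fin m) (Fin n) ℂ) (hM : M ≠ 0) :
    l2OpNorm M ≤ Real.sqrt (∑ i, ∑ j, ‖M i j‖ ^ 2) ∧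
      (l2OpNorm M = Real.sqrt (∑ i, ∑ j, ‖M i j‖ ^ 2) ↔ M.rank = 1) := by
  set hA := isHermitian_conjTranspose_mul_self M
  have hev : 0 ≤ hA.eigenvalues := eigenvalues_conjTranspose_mul_self_nonneg M
  have hev0 : hA.eigenvalues ≠ 0 := by
    rwa [Ne, hA.eigenvalues_eq_zero_iff, conjTranspose_mul_self_eq_zero]
  have hop : l2OpNorm M = √‖hA.eigenvalues‖ := by
    rw [← hA.l2_opNorm_eq_norm_eigenvalues, l2_opNorm_conjTranspose_mul_self,
      Real.sqrt_mul_self (norm_nonneg _), l2OpNorm_eq_l2_opNorm]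
  rw [hop, ← sum_eigenvalues_conjTranspose_mul_self, ← rank_conjTranspose_mul_self,
    hA.rank_eq_card_non_zero_eigs,
    Real.sqrt_inj (norm_nonneg _) (Finset.sum_nonneg fun j _ => hev j),
    pi_norm_eq_sum_iff_card_ne_zero_eq_one hev hev0]
  exact ⟨Real.sqrt_le_sqrt (pi_norm_le_sum_of_nonneg hev), Iff.rfl⟩
end

section
/- Let M : Matrix (Fin m) (Fin n) ℝ have all entries nonnegative. Then the ℓ²→ℓ² operator norm of M (its largest singular value) equals the supremum, over unit vectors x : Fin m → ℝ and y : Fin n → ℝ all of whose entries are nonnegative, of ∑_{i,j} x(i) · M i j · y(j). -/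
/-- The ℓ²→ℓ² operator norm of a real matrix: the operator norm of the induced
continuous linear map between the corresponding Euclidean spaces (i.e. the largest
singular value). -/
noncomputable def l2OpNormReal {m n : ℕ} (M : Matrix (Fin m) (Fin n) ℝ) : ℝ :=
  ‖LinearMap.toContinuousLinearMap (Matrix.toEuclideanLin M)‖

/-!
Every value `⟪x, M y⟫` at unit vectors is at most `‖M‖` by Cauchy–Schwarz. Conversely, a
nonnegative matrix satisfies `|M v| ≤ M |v|` coordinatewise, so `‖M v‖ ≤ ‖M |v|‖` and it suffices
to bound `‖M y‖` for nonnegative `y`. Then `M y` is nonnegative as well, and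
`‖M y‖ ^ 2 = ⟪M y, M y⟫` is, after normalising both `M y` and `y`, a value of the bilinear form
at nonnegative unit vectors.
-/
open WithLp
open scoped RealInnerProductSpace

lemma EuclideanSpace.norm_toLp_eq_one_iff {ι : Type*} [Fintype ι] {x : ι → ℝ} :
    ‖toLp 2 x‖ = 1 ↔ ∑ i, x i ^ 2 = 1 := by
  rw [← pow_eq_one_iff_of_nonneg (norm_nonneg _) two_ne_zero, EuclideanSpace.real_norm_sq_eq]

lemma EuclideanSpace.norm_toLp_abs {ι : Type*} [Fintype ι] (x : EuclideanSpace ℝ ι) :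
    ‖toLp 2 (fun i => |x i|)‖ = ‖x‖ := by
  simp only [EuclideanSpace.norm_eq, Real.norm_eq_abs, abs_abs]

namespace Matrix

lemma toEuclideanLin_apply_nonneg {ι κ : Type*} [Fintype κ] [DecidableEq κ] {M : Matrix ι κ ℝ}
    (hM : ∀ i j, 0 ≤ M i j) {y : EuclideanSpace ℝ κ} (hy : ∀ j, 0 ≤ y j) (i : ι) :
    0 ≤ toEuclideanLin M y i :=
  Finset.sum_nonneg fun j _ => mul_nonneg (hM i j) (hy j)

variable {ι κ : Type*} [Fintype ι] [Fintype κ]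

def nonnegUnitBilinearValues (M : Matrix ι κ ℝ) : Set ℝ :=
  {s | ∃ (x : ι → ℝ) (y : κ → ℝ), (∑ i, x i ^ 2 = 1) ∧ (∑ j, y j ^ 2 = 1) ∧
    (∀ i, 0 ≤ x i) ∧ (∀ j, 0 ≤ y j) ∧ s = ∑ i, ∑ j, x i * M i j * y j}

lemma nonneg_of_mem_nonnegUnitBilinearValues {M : Matrix ι κ ℝ} (hM : ∀ i j, 0 ≤ M i j) {s : ℝ}
    (hs : s ∈ nonnegUnitBilinearValues M) : 0 ≤ s := by
  obtain ⟨x, y, -, -, hx, hy, rfl⟩ := hs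
  exact Finset.sum_nonneg fun i _ => Finset.sum_nonneg fun j _ =>
    mul_nonneg (mul_nonneg (hx i) (hM i j)) (hy j)

lemma sSup_nonnegUnitBilinearValues_nonneg {M : Matrix ι κ ℝ} (hM : ∀ i j, 0 ≤ M i j) :
    0 ≤ sSup (nonnegUnitBilinearValues M) :=
  Real.sSup_nonneg fun _ => nonneg_of_mem_nonnegUnitBilinearValues hM

variable [DecidableEq κ] {M : Matrix ι κ ℝ}

lemma sum_mul_mul_eq_inner_toEuclideanLin (M : Matrix ι κ ℝ) (x : ι → ℝ) (y : κ → ℝ) :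
    ∑ i, ∑ j, x i * M i j * y j = ⟪toLp 2 x, toEuclideanLin M (toLp 2 y)⟫ := by
  simp [EuclideanSpace.inner_toLp_toLp, dotProduct, mulVec, Finset.mul_sum, mul_comm,
    mul_left_comm]

lemma le_opNorm_of_mem_nonnegUnitBilinearValues {s : ℝ} (hs : s ∈ nonnegUnitBilinearValues M) :
    s ≤ ‖(toEuclideanLin M).toContinuousLinearMap‖ := by
  obtain ⟨x, y, hx, hy, -, -, rfl⟩ := hs
  rw [← EuclideanSpace.norm_toLp_eq_one_iff] at hx hy
  rw [sum_mul_mul_eq_inner_toEuclideanLin]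
  set T := (toEuclideanLin M).toContinuousLinearMap
  calc _ ≤ ‖toLp 2 x‖ * ‖T (toLp 2 y)‖ := real_inner_le_norm _ _
    _ ≤ 1 * (‖T‖ * ‖toLp 2 y‖) := by rw [hx]; gcongr; exact T.le_opNorm _
    _ = ‖T‖ := by rw [hy, one_mul, mul_one]

lemma bddAbove_nonnegUnitBilinearValues (M : Matrix ι κ ℝ) :
    BddAbove (nonnegUnitBilinearValues M) :=
  ⟨_, fun _ => le_opNorm_of_mem_nonnegUnitBilinearValues⟩

lemma inner_mem_nonnegUnitBilinearValues {x : EuclideanSpace ℝ ι} {y : EuclideanSpace ℝ κ}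
    (hx : ‖x‖ = 1) (hy : ‖y‖ = 1) (hx0 : ∀ i, 0 ≤ x i) (hy0 : ∀ j, 0 ≤ y j) :
    ⟪x, toEuclideanLin M y⟫ ∈ nonnegUnitBilinearValues M :=
  ⟨ofLp x, ofLp y, EuclideanSpace.norm_toLp_eq_one_iff.1 hx,
    EuclideanSpace.norm_toLp_eq_one_iff.1 hy, hx0, hy0,
    (sum_mul_mul_eq_inner_toEuclideanLin M _ _).symm⟩

lemma inner_toEuclideanLin_le_sSup_mul {x : EuclideanSpace ℝ ι}
    {y : EuclideanSpace ℝ κ} (hx0 : ∀ i, 0 ≤ x i) (hy0 : ∀ j, 0 ≤ y j) :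
    ⟪x, toEuclideanLin M y⟫ ≤ sSup (nonnegUnitBilinearValues M) * (‖x‖ * ‖y‖) := by
  rcases eq_or_ne x 0 with rfl | hx
  · simp
  rcases eq_or_ne y 0 with rfl | hy
  · simp
  set u := ‖x‖⁻¹ • x
  set v := ‖y‖⁻¹ • y
  have hu0 : ∀ i, 0 ≤ u i := fun i => mul_nonneg (by positivity) (hx0 i)
  have hv0 : ∀ j, 0 ≤ v j := fun j => mul_nonneg (by positivity) (hy0 j)
  have huv : ⟪x, toEuclideanLin M y⟫ = ‖x‖ * ‖y‖ * ⟪u, toEuclideanLin M v⟫ := by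
    simp only [u, v, map_smul, real_inner_smul_left, real_inner_smul_right]
    field_simp
  rw [huv, mul_comm]
  gcongr
  exact le_csSup (bddAbove_nonnegUnitBilinearValues M) (inner_mem_nonnegUnitBilinearValues
    (norm_smul_inv_norm hx) (norm_smul_inv_norm hy) hu0 hv0)

lemma norm_toEuclideanLin_le_sSup_mul (hM : ∀ i j, 0 ≤ M i j) {y : EuclideanSpace ℝ κ}
    (hy0 : ∀ j, 0 ≤ y j) :
    ‖toEuclideanLin M y‖ ≤ sSup (nonnegUnitBilinearValues M) * ‖y‖ := by
  set z := toEuclideanLin M y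
  have h := inner_toEuclideanLin_le_sSup_mul (M := M) (toEuclideanLin_apply_nonneg hM hy0) hy0
  rw [real_inner_self_eq_norm_sq] at h
  rcases (norm_nonneg z).eq_or_lt with hz | hz
  · rw [← hz]
    exact mul_nonneg (sSup_nonnegUnitBilinearValues_nonneg hM) (norm_nonneg y)
  · rw [sq, mul_left_comm] at h
    exact le_of_mul_le_mul_left h hz

lemma norm_toEuclideanLin_le_norm_toEuclideanLin_abs (hM : ∀ i j, 0 ≤ M i j)
    (y : EuclideanSpace ℝ κ) :
    ‖toEuclideanLin M y‖ ≤ ‖toEuclideanLin M (toLp 2 fun j => |y j|)‖ := by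
  rw [← sq_le_sq₀ (norm_nonneg _) (norm_nonneg _), EuclideanSpace.real_norm_sq_eq,
    EuclideanSpace.real_norm_sq_eq]
  refine Finset.sum_le_sum fun i _ => sq_le_sq.2 ?_
  calc |toEuclideanLin M y i| ≤ ∑ j, |M i j * y j| := Finset.abs_sum_le_sum_abs _ _
    _ = toEuclideanLin M (toLp 2 fun j => |y j|) i := by
      simp [toLpLin_apply, mulVec, dotProduct, abs_mul, abs_of_nonneg (hM i _)]
    _ ≤ _ := le_abs_self _

end Matrix

/-- For a real matrix `M` with nonnegative entries, the ℓ²→ℓ² operator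
norm (largest singular value) of `M` equals the supremum, over unit vectors `x`, `y`
with nonnegative entries, of `∑ i j, x i * M i j * y j`. -/
theorem l2OpNorm_eq_sSup_nonneg_unit_vectors
    {m n : ℕ} (M : Matrix (Fin m) (Fin n) ℝ) (hM : ∀ i j, 0 ≤ M i j) :
    l2OpNormReal M =
      sSup {s : ℝ | ∃ (x : Fin m → ℝ) (y : Fin n → ℝ),
        (∑ i, x i ^ 2 = 1) ∧ (∑ j, y j ^ 2 = 1) ∧
        (∀ i, 0 ≤ x i) ∧ (∀ j, 0 ≤ y j) ∧
        s = ∑ i, ∑ j, x i * M i j * y j} := by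
  set S := Matrix.nonnegUnitBilinearValues M
  change ‖(Matrix.toEuclideanLin M).toContinuousLinearMap‖ = sSup S
  refine le_antisymm (ContinuousLinearMap.opNorm_le_bound _
    (Matrix.sSup_nonnegUnitBilinearValues_nonneg hM) fun y => ?_)
    (Real.sSup_le (fun _ => Matrix.le_opNorm_of_mem_nonnegUnitBilinearValues) (norm_nonneg _))
  calc ‖Matrix.toEuclideanLin M y‖ ≤ ‖Matrix.toEuclideanLin M (toLp 2 fun j => |y j|)‖ :=
        Matrix.norm_toEuclideanLin_le_norm_toEuclideanLin_abs hM y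
    _ ≤ sSup S * ‖toLp 2 fun j => |y j|‖ :=
        Matrix.norm_toEuclideanLin_le_sSup_mul hM fun j => abs_nonneg (y j)
    _ = sSup S * ‖y‖ := by rw [EuclideanSpace.norm_toLp_abs]
end

section
/- Let U be a 2×2 complex unitary matrix, and let ψ : Fin 2 × Fin 2 → ℂ be defined by ψ(i,j) = U i j / √2 (the coefficients of a two-qubit maximally entangled state). Then there exists a permutation π of Fin 2 × Fin 2 such that the real matrix M with M(i,j) = |ψ(π(i,j))| has rank 1. Consequently, every two-qubit maximally entangled pure state has vanishing genuine distributed coherence, i.e., can be mapped to a product vector by an incoherent unitary. -/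
/-!
Row and column normalisation of a `2 × 2` unitary force `|U₁₁| = |U₀₀|` and `|U₁₀| = |U₀₁|`.
Hence exchanging the two entries of the second row turns the matrix of moduli into one with
two equal, nonzero rows, which has rank one. Removing the phase of every entry then writes the
permuted state as the product of `(1, 1)` with the common row of moduli.
-/

open Matrix

theorem Matrix.rank_replicateRow {ι n K : Type*} [Fintype n] [Nonempty ι] [Field K]
    {v : n → K} (hv : v ≠ 0) : (replicateRow ι v).rank = 1 := by
  classical
  refine le_antisymm ?_ (Nat.one_le_iff_ne_zero.mpr fun h => hv ?_)
  · simpa using rank_vecMulVec_le (1 : ι → K) v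
  · rw [Matrix.rank, Submodule.finrank_eq_zero, LinearMap.range_eq_bot] at h
    inhabit ι
    funext j
    simpa using congrFun (LinearMap.congr_fun h (Pi.single j 1)) default

section Unitary

variable {𝕜 n : Type*} [RCLike 𝕜] [Fintype n] [DecidableEq n] {U : Matrix n n 𝕜}

theorem Matrix.sum_norm_sq_row_of_mem_unitaryGroup (hU : U ∈ unitaryGroup n 𝕜) (i : n) :
    ∑ j, ‖U i j‖ ^ 2 = 1 := by
  have h : (U * star U) i i = (1 : Matrix n n 𝕜) i i := by
    rw [Unitary.mul_star_self_of_mem hU]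
  simp only [star_eq_conjTranspose, mul_apply, conjTranspose_apply, ← starRingEnd_apply,
    RCLike.mul_conj, one_apply_eq] at h
  exact_mod_cast h

theorem Matrix.sum_norm_sq_col_of_mem_unitaryGroup (hU : U ∈ unitaryGroup n 𝕜) (j : n) :
    ∑ i, ‖U i j‖ ^ 2 = 1 := by
  have h : (star U * U) j j = (1 : Matrix n n 𝕜) j j := by
    rw [Unitary.star_mul_self_of_mem hU]
  simp only [star_eq_conjTranspose, mul_apply, conjTranspose_apply, ← starRingEnd_apply,
    RCLike.conj_mul, one_apply_eq] at h
  exact_mod_cast h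

end Unitary

theorem Matrix.norm_apply_eq_of_mem_unitaryGroup_fin_two {𝕜 : Type*} [RCLike 𝕜]
    {U : Matrix (Fin 2) (Fin 2) 𝕜} (hU : U ∈ unitaryGroup (Fin 2) 𝕜) :
    ‖U 1 1‖ = ‖U 0 0‖ ∧ ‖U 1 0‖ = ‖U 0 1‖ := by
  have row₀ := sum_norm_sq_row_of_mem_unitaryGroup hU 0
  have col₀ := sum_norm_sq_col_of_mem_unitaryGroup hU 0
  have col₁ := sum_norm_sq_col_of_mem_unitaryGroup hU 1
  simp only [Fin.sum_univ_two] at row₀ col₀ col₁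
  constructor <;> refine (sq_eq_sq₀ (norm_nonneg _) (norm_nonneg _)).mp ?_ <;> linarith

theorem Complex.exp_neg_arg_mul_I_mul (z : ℂ) : exp (↑(-arg z) * I) * z = ‖z‖ := by
  conv_lhs => rw [← norm_mul_exp_arg_mul_I z]
  rw [mul_left_comm, ← exp_add]
  push_cast
  simp

/-- Let `U` be a 2×2 complex unitary and let
`ψ (i,j) = U i j / √2` be the coefficients of a two-qubit maximally entangled state.
Then some permutation `π` of `Fin 2 × Fin 2` makes the matrix of moduli
`(i,j) ↦ |ψ (π (i,j))|` have rank one; consequently, `ψ` can be mapped to a product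
vector by an incoherent unitary (a permutation together with phases), i.e. every
two-qubit maximally entangled state has vanishing genuine distributed coherence. -/
theorem maximally_entangled_two_qubit_vanishing_GDC
    (U : Matrix.unitaryGroup (Fin 2) ℂ)
    (ψ : Fin 2 × Fin 2 → ℂ)
    (hψ : ∀ p : Fin 2 × Fin 2,
      ψ p = (U : Matrix (Fin 2) (Fin 2) ℂ) p.1 p.2 / (Real.sqrt 2 : ℂ)) :
    (∃ π : Equiv.Perm (Fin 2 × Fin 2),
        (Matrix.of fun i j => ‖ψ (π (i, j))‖).rank = 1) ∧
      (∃ (π : Equiv.Perm (Fin 2 × Fin 2)) (φ : Fin 2 × Fin 2 → ℝ)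
          (a b : Fin 2 → ℂ),
          ∀ p : Fin 2 × Fin 2,
            Complex.exp ((φ p : ℂ) * Complex.I) * ψ (π p) = a p.1 * b p.2) := by
  obtain ⟨h11, h10⟩ := norm_apply_eq_of_mem_unitaryGroup_fin_two U.2
  let π := Equiv.swap ((1 : Fin 2), (0 : Fin 2)) (1, 1)
  let r : Fin 2 → ℝ := fun j => ‖ψ (0, j)‖
  have hrows : (Matrix.of fun i j => ‖ψ (π (i, j))‖) = replicateRow (Fin 2) r := by
    ext i j
    fin_cases i <;> fin_cases j <;> simp [π, r, hψ, Equiv.swap_apply_of_ne_of_ne, h11, h10]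
  have hr : r ≠ 0 := fun h => by
    have h0 : ‖(U : Matrix (Fin 2) (Fin 2) ℂ) 0 0‖ = 0 := by simpa [r, hψ] using congrFun h 0
    have h1 : ‖(U : Matrix (Fin 2) (Fin 2) ℂ) 0 1‖ = 0 := by simpa [r, hψ] using congrFun h 1
    simpa [h0, h1] using sum_norm_sq_row_of_mem_unitaryGroup U.2 0
  refine ⟨⟨π, hrows ▸ rank_replicateRow hr⟩, π, fun p => -Complex.arg (ψ (π p)), 1,
    fun j => r j, fun p => ?_⟩
  have hp : ‖ψ (π p)‖ = r p.2 := by simpa using Matrix.ext_iff.mpr hrows p.1 p.2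
  rw [Complex.exp_neg_arg_mul_I_mul, hp, Pi.one_apply, one_mul]
end

section
/- Let ψ : Fin dA × Fin dB → ℂ, and suppose the number of pairs (i,j) with ψ(i,j) ≠ 0 is a prime number p with p > max(dA, dB). Then for every permutation π of Fin dA × Fin dB, the real matrix M with M(i,j) = |ψ(π(i,j))| does not have rank 1; consequently there is no incoherent unitary mapping ψ to a product vector, i.e., ψ has nonzero genuine distributed coherence. -/
/-!
If `ψ ∘ π` had a rank-one modulus matrix `u i * w j`, or were a product vector up to phases,
its support would be a rectangle `s ×ˢ t` with `s ⊆ Fin dA` and `t ⊆ Fin dB`. Permuting does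
not change the size of the support, so the prime `p` would factor as `|s| * |t|` with both
factors at most `max dA dB < p`, which is impossible.
-/

theorem Nat.Prime.mul_ne_of_lt {p x y : ℕ} (hp : p.Prime) (hx : x < p) (hy : y < p) :
    x * y ≠ p := by
  rintro rfl
  rcases Nat.prime_mul_iff.mp hp with ⟨-, rfl⟩ | ⟨-, rfl⟩ <;> omega

theorem Set.ncard_prod_ne_prime {m n p : ℕ} (s : Set (Fin m)) (t : Set (Fin n))
    (hp : p.Prime) (hgt : max m n < p) : (s ×ˢ t).ncard ≠ p := by
  have hs : s.ncard ≤ m := by simpa using s.ncard_le_card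
  have ht : t.ncard ≤ n := by simpa using t.ncard_le_card
  rw [Set.ncard_prod]
  exact hp.mul_ne_of_lt (by omega) (by omega)

theorem setOf_ne_zero_eq_prod_of_zero_iff_mul {α β M K : Type*} [Zero M] [MulZeroClass K]
    [NoZeroDivisors K] {f : α × β → M} (u : α → K) (w : β → K)
    (hf : ∀ q, f q = 0 ↔ u q.1 * w q.2 = 0) :
    {q | f q ≠ 0} = {i | u i ≠ 0} ×ˢ {j | w j ≠ 0} := by
  ext q
  simp only [Set.mem_ofPred_eq, Set.mem_prod, ne_eq, hf, mul_eq_zero, not_or]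

theorem ncard_setOf_comp_perm_ne_zero {α M : Type*} [Zero M] (f : α → M) (π : Equiv.Perm α) :
    {q | f (π q) ≠ 0}.ncard = {q | f q ≠ 0}.ncard :=
  Set.ncard_preimage_of_injective_subset_range (s := {q | f q ≠ 0}) π.injective (by simp)

theorem Matrix.exists_eq_mul_of_rank_eq_one {m n K : Type*} [Fintype n] [Field K]
    {A : Matrix m n K} (hA : A.rank = 1) :
    ∃ (u : m → K) (w : n → K), ∀ i j, A i j = u i * w j := by
  obtain ⟨v, -, hv⟩ := finrank_eq_one_iff'.mp hA
  classical
  have hcol : ∀ j, A.col j ∈ LinearMap.range A.mulVecLin := fun j =>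
    ⟨Pi.single j 1, by rw [Matrix.mulVecLin_apply, Matrix.mulVec_single_one]⟩
  choose c hc using fun j => hv ⟨A.col j, hcol j⟩
  refine ⟨v, c, fun i j => ?_⟩
  have := congrFun (congrArg Subtype.val (hc j)) i
  simp only [SetLike.val_smul, Pi.smul_apply, smul_eq_mul, Matrix.col_apply] at this
  rw [← this, mul_comm]

/-- If the number of nonzero coefficients of `ψ : Fin dA × Fin dB → ℂ`
is a prime `p` strictly larger than `max dA dB`, then for every permutation `π` the
matrix of moduli `(i,j) ↦ |ψ (π (i,j))|` does not have rank one; consequently no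
incoherent unitary (permutation plus phases) maps `ψ` to a product vector, i.e. `ψ`
has nonzero genuine distributed coherence. -/
theorem prime_support_implies_no_rank_one_rearrangement
    {dA dB : ℕ} (ψ : Fin dA × Fin dB → ℂ) (p : ℕ)
    (hcard : {q : Fin dA × Fin dB | ψ q ≠ 0}.ncard = p)
    (hp : p.Prime) (hgt : max dA dB < p) :
    (∀ π : Equiv.Perm (Fin dA × Fin dB),
        (Matrix.of fun i j => ‖ψ (π (i, j))‖).rank ≠ 1) ∧
      ¬ ∃ (π : Equiv.Perm (Fin dA × Fin dB)) (φ : Fin dA × Fin dB → ℝ)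
          (a : Fin dA → ℂ) (b : Fin dB → ℂ),
          ∀ q : Fin dA × Fin dB,
            Complex.exp ((φ q : ℂ) * Complex.I) * ψ (π q) = a q.1 * b q.2 := by
  have not_rectangle : ∀ (π : Equiv.Perm (Fin dA × Fin dB)) (s : Set (Fin dA))
      (t : Set (Fin dB)), {q | ψ (π q) ≠ 0} ≠ s ×ˢ t := by
    intro π s t hst
    apply Set.ncard_prod_ne_prime s t hp hgt
    rw [← hst, ncard_setOf_comp_perm_ne_zero, hcard]
  constructor
  · intro π hrank
    obtain ⟨u, w, huw⟩ := Matrix.exists_eq_mul_of_rank_eq_one hrank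
    refine not_rectangle π _ _ (setOf_ne_zero_eq_prod_of_zero_iff_mul u w fun q => ?_)
    rw [← huw, Matrix.of_apply, norm_eq_zero]
  · rintro ⟨π, φ, a, b, hab⟩
    refine not_rectangle π _ _ (setOf_ne_zero_eq_prod_of_zero_iff_mul a b fun q => ?_)
    rw [← hab, mul_eq_zero, or_iff_right (Complex.exp_ne_zero _)]
end

section
/- Define ψ : Fin 3 × Fin 3 → ℂ by ψ(i,j) = (1/√3)·(1/2)·(1 + I·(−1)^{i+j}) for i,j ∈ {0,1}, ψ(2,2) = 1/√3, and ψ(i,j) = 0 otherwise (this is the two-qutrit maximally entangled state (1/√3)(|+⟩|+⟩ + i|−⟩|−⟩ + |2⟩|2⟩) expressed in the standard basis). Then ψ has exactly 5 nonzero coefficients, and for every permutation π of Fin 3 × Fin 3 the real matrix (i,j) ↦ |ψ(π(i,j))| does not have rank 1; consequently no incoherent unitary maps ψ to a product vector, i.e., ψ has nonzero genuine distributed coherence. -/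
/-!
The support of a product vector `(i, j) ↦ a i * b j` is a rectangle `supp a ×ˢ supp b`, so on
`Fin 3 × Fin 3` its size is a product of two numbers at most `3`, hence never the prime `5`.
Permuting coordinates, multiplying by phases and taking moduli all preserve the size of the
support, and a rank-one real matrix is such a product, while `ψ` has exactly five nonzero
coefficients.
-/

open Function Set

theorem Matrix.exists_eq_vecMulVec_of_rank_le_one {m n K : Type*} [Fintype n] [Field K]
    {A : Matrix m n K} (h : A.rank ≤ 1) : ∃ u v, A = vecMulVec u v := by
  have := FiniteDimensional.span_of_finite K (finite_range A.col)
  rw [rank_eq_finrank_span_cols, finrank_le_one_iff] at h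
  obtain ⟨v, hv⟩ := h
  choose c hc using fun j => hv ⟨A.col j, Submodule.subset_span ⟨j, rfl⟩⟩
  refine ⟨v, c, Matrix.ext fun i j => ?_⟩
  have := congrArg (fun w : Submodule.span K (range A.col) => (w : m → K) i) (hc j)
  simpa [vecMulVec_apply, mul_comm] using this.symm

section Support

variable {α β M : Type*}

theorem support_mul_fst_snd [MulZeroClass M] [NoZeroDivisors M] (f : α → M) (g : β → M) :
    support (fun q : α × β => f q.1 * g q.2) = support f ×ˢ support g := by
  ext q
  simp

theorem ncard_support_mul_fst_snd_ne_prime [Finite α] [Finite β] [MulZeroClass M]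
    [NoZeroDivisors M] {p : ℕ} (hp : p.Prime) (hα : Nat.card α < p) (hβ : Nat.card β < p)
    (f : α → M) (g : β → M) : (support fun q : α × β => f q.1 * g q.2).ncard ≠ p := by
  rw [support_mul_fst_snd, ncard_prod]
  intro hfg
  have hf := (support f).ncard_le_card
  have hg := (support g).ncard_le_card
  rcases hp.eq_one_or_self_of_dvd _ (Dvd.intro _ hfg) with h1 | hpf
  · rw [h1, one_mul] at hfg
    omega
  · omega

theorem not_forall_norm_perm_apply_eq_mul [Finite α] [Finite β] {E : Type*}
    [NormedAddGroup E] {ψ : α × β → E} {p : ℕ} (hψ : (support ψ).ncard = p) (hp : p.Prime)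
    (hα : Nat.card α < p) (hβ : Nat.card β < p) (π : Equiv.Perm (α × β))
    (u : α → ℝ) (v : β → ℝ) :
    ¬ ∀ q, ‖ψ (π q)‖ = u q.1 * v q.2 := by
  intro h
  have hsupp : support (fun q : α × β => u q.1 * v q.2) = π ⁻¹' support ψ := by
    ext q
    simp [← h]
  apply ncard_support_mul_fst_snd_ne_prime hp hα hβ u v
  rw [hsupp, ncard_preimage_of_injective_subset_range π.injective (by simp), hψ]

end Support

/-- The two-qutrit maximally entangled state
`(1/√3)(|+⟩|+⟩ + i|−⟩|−⟩ + |2⟩|2⟩)`, whose coefficients in the standard basis are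
`ψ (i,j) = (1/√3)·(1/2)·(1 + I·(−1)^(i+j))` for `i,j ∈ {0,1}`, `ψ (2,2) = 1/√3` and
`0` otherwise, has exactly 5 nonzero coefficients, and for every permutation `π` of
`Fin 3 × Fin 3` the matrix of moduli `(i,j) ↦ |ψ (π (i,j))|` does not have rank one;
consequently no incoherent unitary maps `ψ` to a product vector, i.e. `ψ` has
nonzero genuine distributed coherence. -/
theorem two_qutrit_max_entangled_has_GDC
    (ψ : Fin 3 × Fin 3 → ℂ)
    (hψ : ∀ q : Fin 3 × Fin 3,
      ψ q =
        if (q.1 : ℕ) < 2 ∧ (q.2 : ℕ) < 2 then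
          (1 / (Real.sqrt 3 : ℂ)) * (1 / 2) *
            (1 + Complex.I * (-1 : ℂ) ^ ((q.1 : ℕ) + (q.2 : ℕ)))
        else if q = (2, 2) then 1 / (Real.sqrt 3 : ℂ)
        else 0) :
    {q : Fin 3 × Fin 3 | ψ q ≠ 0}.ncard = 5 ∧
      (∀ π : Equiv.Perm (Fin 3 × Fin 3),
        (Matrix.of fun i j => ‖ψ (π (i, j))‖).rank ≠ 1) ∧
      ¬ ∃ (π : Equiv.Perm (Fin 3 × Fin 3)) (φ : Fin 3 × Fin 3 → ℝ)
          (a b : Fin 3 → ℂ),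
          ∀ q : Fin 3 × Fin 3,
            Complex.exp ((φ q : ℂ) * Complex.I) * ψ (π q) = a q.1 * b q.2 := by
  have hsupp : (support ψ).ncard = 5 := by
    have hS : support ψ =
        ↑({(0, 0), (0, 1), (1, 0), (1, 1), (2, 2)} : Finset (Fin 3 × Fin 3)) := by
      ext q
      fin_cases q <;> simp [hψ, Prod.ext_iff, Complex.ext_iff]
    rw [hS, ncard_coe_finset]
    rfl
  have not_product := not_forall_norm_perm_apply_eq_mul hsupp Nat.prime_five (by simp) (by simp)
  refine ⟨hsupp, fun π hrank => ?_, ?_⟩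
  · obtain ⟨u, v, huv⟩ := Matrix.exists_eq_vecMulVec_of_rank_le_one hrank.le
    exact not_product π u v fun q => congrFun₂ huv q.1 q.2
  · rintro ⟨π, φ, a, b, hab⟩
    refine not_product π (‖a ·‖) (‖b ·‖) fun q => ?_
    simpa [Complex.norm_exp_ofReal_mul_I] using congrArg norm (hab q)
end

section
/- Let a, b, c, d : ℝ satisfy a ≥ b ≥ c ≥ d ≥ 0 and a > 0. Then there exists a 2×2 real matrix whose multiset of entries is {a, b, c, d} and whose rank is 1 if and only if a·d = b·c. Equivalently: for a two-qubit pure state with coefficient moduli a ≥ b ≥ c ≥ d, some permutation of the coefficients yields a rank-one modulus matrix (so the state has zero genuine distributed coherence) if and only if the product of the largest and smallest moduli equals the product of the remaining two. -/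
open Matrix

private lemma pair_cases (p q c d : ℝ) (h : p ::ₘ q ::ₘ (0 : Multiset ℝ) = c ::ₘ d ::ₘ 0) :
    (p = c ∧ q = d) ∨ (p = d ∧ q = c) := by
  have hp : p ∈ c ::ₘ d ::ₘ (0 : Multiset ℝ) := h ▸ Multiset.mem_cons_self _ _
  simp only [Multiset.mem_cons, Multiset.notMem_zero, or_false] at hp
  rcases hp with hp | hp
  · left
    subst hp
    rw [Multiset.cons_inj_right] at h
    exact ⟨rfl, by simpa using h⟩
  · right
    subst hp
    rw [Multiset.cons_swap c p, Multiset.cons_inj_right] at h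
    exact ⟨rfl, by simpa using h⟩

private lemma triple_cases (p q r b c d : ℝ)
    (h : p ::ₘ q ::ₘ r ::ₘ (0 : Multiset ℝ) = b ::ₘ c ::ₘ d ::ₘ 0) :
    (p = b ∧ ((q = c ∧ r = d) ∨ (q = d ∧ r = c))) ∨
    (p = c ∧ ((q = b ∧ r = d) ∨ (q = d ∧ r = b))) ∨
    (p = d ∧ ((q = b ∧ r = c) ∨ (q = c ∧ r = b))) := by
  have hp : p ∈ b ::ₘ c ::ₘ d ::ₘ (0 : Multiset ℝ) := h ▸ Multiset.mem_cons_self _ _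
  simp only [Multiset.mem_cons, Multiset.notMem_zero, or_false] at hp
  rcases hp with hp | hp | hp
  · subst hp
    rw [Multiset.cons_inj_right] at h
    exact Or.inl ⟨rfl, pair_cases _ _ _ _ h⟩
  · subst hp
    rw [Multiset.cons_swap b p, Multiset.cons_inj_right] at h
    exact Or.inr (Or.inl ⟨rfl, pair_cases _ _ _ _ h⟩)
  · subst hp
    rw [Multiset.cons_swap c p, Multiset.cons_swap b p, Multiset.cons_inj_right] at h
    exact Or.inr (Or.inr ⟨rfl, pair_cases _ _ _ _ h⟩)

private lemma pairing_lemma (w x y z a b c d : ℝ)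
    (h : ({w, x, y, z} : Multiset ℝ) = {a, b, c, d}) (hv : w * z = x * y) :
    a * d = b * c ∨ a * b = c * d ∨ a * c = b * d := by
  have h' : w ::ₘ x ::ₘ y ::ₘ z ::ₘ (0 : Multiset ℝ) = a ::ₘ b ::ₘ c ::ₘ d ::ₘ 0 := h
  have hw : w ∈ a ::ₘ b ::ₘ c ::ₘ d ::ₘ (0 : Multiset ℝ) := h' ▸ Multiset.mem_cons_self _ _
  simp only [Multiset.mem_cons, Multiset.notMem_zero, or_false] at hw
  rcases hw with hw | hw | hw | hw
  all_goals subst hw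
  · rw [Multiset.cons_inj_right] at h'
    rcases triple_cases _ _ _ _ _ _ h' with ⟨h1, h2 | h2⟩ | ⟨h1, h2 | h2⟩ | ⟨h1, h2 | h2⟩ <;>
      obtain ⟨h2, h3⟩ := h2 <;> subst h1 <;> subst h2 <;> subst h3 <;>
      first
        | exact Or.inl (by linear_combination hv)
        | exact Or.inr (Or.inl (by linear_combination hv))
        | exact Or.inr (Or.inr (by linear_combination hv))
        | exact Or.inl (by linear_combination -hv)
        | exact Or.inr (Or.inl (by linear_combination -hv))
        | exact Or.inr (Or.inr (by linear_combination -hv))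
  · rw [Multiset.cons_swap a w, Multiset.cons_inj_right] at h'
    rcases triple_cases _ _ _ _ _ _ h' with ⟨h1, h2 | h2⟩ | ⟨h1, h2 | h2⟩ | ⟨h1, h2 | h2⟩ <;>
      obtain ⟨h2, h3⟩ := h2 <;> subst h1 <;> subst h2 <;> subst h3 <;>
      first
        | exact Or.inl (by linear_combination hv)
        | exact Or.inr (Or.inl (by linear_combination hv))
        | exact Or.inr (Or.inr (by linear_combination hv))
        | exact Or.inl (by linear_combination -hv)
        | exact Or.inr (Or.inl (by linear_combination -hv))
        | exact Or.inr (Or.inr (by linear_combination -hv))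
  · rw [Multiset.cons_swap b w, Multiset.cons_swap a w, Multiset.cons_inj_right] at h'
    rcases triple_cases _ _ _ _ _ _ h' with ⟨h1, h2 | h2⟩ | ⟨h1, h2 | h2⟩ | ⟨h1, h2 | h2⟩ <;>
      obtain ⟨h2, h3⟩ := h2 <;> subst h1 <;> subst h2 <;> subst h3 <;>
      first
        | exact Or.inl (by linear_combination hv)
        | exact Or.inr (Or.inl (by linear_combination hv))
        | exact Or.inr (Or.inr (by linear_combination hv))
        | exact Or.inl (by linear_combination -hv)
        | exact Or.inr (Or.inl (by linear_combination -hv))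
        | exact Or.inr (Or.inr (by linear_combination -hv))
  · rw [Multiset.cons_swap c w, Multiset.cons_swap b w, Multiset.cons_swap a w,
      Multiset.cons_inj_right] at h'
    rcases triple_cases _ _ _ _ _ _ h' with ⟨h1, h2 | h2⟩ | ⟨h1, h2 | h2⟩ | ⟨h1, h2 | h2⟩ <;>
      obtain ⟨h2, h3⟩ := h2 <;> subst h1 <;> subst h2 <;> subst h3 <;>
      first
        | exact Or.inl (by linear_combination hv)
        | exact Or.inr (Or.inl (by linear_combination hv))
        | exact Or.inr (Or.inr (by linear_combination hv))
        | exact Or.inl (by linear_combination -hv)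
        | exact Or.inr (Or.inl (by linear_combination -hv))
        | exact Or.inr (Or.inr (by linear_combination -hv))

private lemma rank_one_iff_2x2 (A : Matrix (Fin 2) (Fin 2) ℝ) :
    A.rank = 1 ↔ A ≠ 0 ∧ A.det = 0 := by
  constructor
  · intro h
    constructor
    · rintro rfl
      simp [Matrix.rank_zero] at h
    · by_contra hdet
      have hu : IsUnit A := (Matrix.isUnit_iff_isUnit_det A).mpr (isUnit_iff_ne_zero.mpr hdet)
      have := Matrix.rank_of_isUnit A hu
      rw [h] at this
      simp at this
  · rintro ⟨hA, hdet⟩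
    have hsum : A.rank + Module.finrank ℝ (LinearMap.ker A.mulVecLin) = 2 := by
      have := LinearMap.finrank_range_add_finrank_ker A.mulVecLin
      simpa [Matrix.rank, Module.finrank_fin_fun] using this
    have hker : 0 < Module.finrank ℝ (LinearMap.ker A.mulVecLin) := by
      obtain ⟨v, hv0, hv⟩ := (Matrix.exists_mulVec_eq_zero_iff).mpr hdet
      have : Nontrivial (LinearMap.ker A.mulVecLin) := by
        refine ⟨⟨⟨v, ?_⟩, 0, ?_⟩⟩
        · simpa [Matrix.mulVecLin] using hv
        · simp [hv0]
      exact Module.finrank_pos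
    have hrange : 0 < A.rank := by
      have hentry : ∃ i j, A i j ≠ 0 := by
        by_contra hc
        push_neg at hc
        exact hA (Matrix.ext fun i j => hc i j)
      obtain ⟨i, j, hij⟩ := hentry
      have : Nontrivial (LinearMap.range A.mulVecLin) := by
        refine ⟨⟨⟨A *ᵥ Pi.single j 1, ⟨Pi.single j 1, rfl⟩⟩, 0, ?_⟩⟩
        intro hcontra
        apply hij
        have hvec : A *ᵥ Pi.single j 1 = 0 := by
          have := Subtype.ext_iff.mp hcontra
          simpa using this
        have := congrFun hvec i
        simpa using this
      rw [Matrix.rank]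
      exact Module.finrank_pos
    omega

/-- For reals `a ≥ b ≥ c ≥ d ≥ 0` with `a > 0`, there exists a 2×2 real
matrix whose multiset of entries is `{a, b, c, d}` and whose rank is 1 if and only if
`a * d = b * c`. (For a two-qubit pure state with coefficient moduli `a ≥ b ≥ c ≥ d`,
some rearrangement of the coefficients yields a rank-one modulus matrix — i.e. the
state has zero genuine distributed coherence — iff the product of the largest and
smallest moduli equals the product of the remaining two.) -/
theorem exists_rank_one_arrangement_iff_det_condition
    (a b c d : ℝ) (hab : a ≥ b) (hbc : b ≥ c) (hcd : c ≥ d) (hd : d ≥ 0)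
    (ha : a > 0) :
    (∃ M : Matrix (Fin 2) (Fin 2) ℝ,
        ({M 0 0, M 0 1, M 1 0, M 1 1} : Multiset ℝ) = {a, b, c, d} ∧
        M.rank = 1) ↔ a * d = b * c := by
  constructor
  · rintro ⟨M, hM, hrank⟩
    obtain ⟨-, hdet⟩ := (rank_one_iff_2x2 M).mp hrank
    rw [Matrix.det_fin_two] at hdet
    have hv : M 0 0 * M 1 1 = M 0 1 * M 1 0 := by linarith
    rcases pairing_lemma _ _ _ _ a b c d hM hv with h | h | h
    · exact h
    · -- a*b = c*d
      rcases eq_or_lt_of_le (le_trans hd (le_trans hcd hbc)) with hb | hb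
      ·
        have hd0 : d = 0 := le_antisymm (hb ▸ (hcd.trans hbc : b ≥ d)) hd
        rw [hd0, ← hb]
        ring
      · -- b > 0
        have h1 : c * d ≤ c * b := mul_le_mul_of_nonneg_left (le_trans hcd hbc)
          (le_trans hd hcd)
        have h2 : c * b ≤ a * b := mul_le_mul_of_nonneg_right (le_trans hbc hab) (le_of_lt hb)
        have h3 : c * b = a * b := by linarith
        have hac : a = c := by
          have := mul_right_cancel₀ (ne_of_gt hb) h3
          linarith
        have hbd : b = d := by
          have hc : c > 0 := by rw [← hac]; exact ha
          have h4 : c * d = c * b := by linarith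
          have := mul_left_cancel₀ (ne_of_gt hc) h4
          linarith
        rw [hac, ← hbd] at h ⊢
        linarith [h]
    · -- a*c = b*d
      rcases eq_or_lt_of_le (le_trans hd hcd) with hc | hc
      · have hd0 : d = 0 := le_antisymm (hc ▸ hcd) hd
        rw [hd0, ← hc]
        ring
      · have h1 : b * d ≤ b * c := mul_le_mul_of_nonneg_left hcd (le_trans (le_of_lt hc) hbc)
        have h2 : b * c ≤ a * c := mul_le_mul_of_nonneg_right hab (le_of_lt hc)
        have h3 : b * c = a * c := by linarith
        have hab' : a = b := by
          have := mul_right_cancel₀ (ne_of_gt hc) h3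
          linarith
        have hcd' : c = d := by
          have hb : b > 0 := lt_of_lt_of_le hc hbc
          have h4 : b * d = b * c := by linarith
          have := mul_left_cancel₀ (ne_of_gt hb) h4
          linarith
        rw [hab', ← hcd']
  · intro heq
    refine ⟨!![a, b; c, d], ?_, ?_⟩
    · norm_num
    · rw [rank_one_iff_2x2]
      constructor
      · intro hzero
        have : a = 0 := by
          have := congrFun (congrFun hzero 0) 0
          simpa using this
        linarith
      · rw [Matrix.det_fin_two_of]
        linarith
end
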